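/- Let $X$ be a Banach space, $f : [a,b] \to X$ differentiable with $\|f'(s)\| \le M$ for $s \in [a,b]$, and $t \in [0,1]$. Then $\left\| \int_a^b f(s)\,ds - (b-a)\left[t f(b) + (1-t) f(a)\right] \right\| \le \left[\frac{1}{4}(b-a)^2 + \left(tb+(1-t)a - \frac{a+b}{2}\right)^2\right] M$. -/
import Mathlib


open MeasureTheory intervalIntegral

theorem stmt13 {X : Type*} [NormedAddCommGroup X] [NormedSpace ℝ X] [CompleteSpace X]
    {a b : ℝ} (hab : a < b) {f f' : ℝ → X}
    (hderiv : ∀ t ∈ Set.Icc a b, HasDerivAt f (f' t) t)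
    {M : ℝ} (hM : ∀ s ∈ Set.Icc a b, ‖f' s‖ ≤ M) {w : ℝ} (hw : w ∈ Set.Icc (0 : ℝ) 1) :
    ‖(∫ s in a..b, f s) - (b - a) • (w • f b + (1 - w) • f a)‖ ≤
      ((1 / 4) * (b - a) ^ 2 + (w * b + (1 - w) * a - (a + b) / 2) ^ 2) * M := by
  obtain ⟨hw0, hw1⟩ := hw
  have hM0 : 0 ≤ M := le_trans (norm_nonneg _) (hM a ⟨le_refl a, hab.le⟩)
  set c : ℝ := w * a + (1 - w) * b with hc
  have hac : a ≤ c := by nlinarith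
  have hcb : c ≤ b := by nlinarith
  have hderivW : ∀ x ∈ Set.Icc a b, HasDerivWithinAt f (f' x) (Set.Icc a b) x :=
    fun x hx => (hderiv x hx).hasDerivWithinAt
  have lip : ∀ x ∈ Set.Icc a b, ∀ y ∈ Set.Icc a b, ‖f y - f x‖ ≤ M * |y - x| := by
    intro x hx y hy
    have := (convex_Icc a b).norm_image_sub_le_of_norm_hasDerivWithin_le hderivW hM hx hy
    simpa [Real.norm_eq_abs] using this
  have hcont : ContinuousOn f (Set.Icc a b) :=
    fun x hx => (hderivW x hx).continuousWithinAt
  have hintf : ∀ u v : ℝ, u ∈ Set.Icc a b → v ∈ Set.Icc a b → IntervalIntegrable f volume u v := by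
    intro u v hu hv
    exact (hcont.mono (Set.uIcc_subset_Icc hu hv)).intervalIntegrable
  have ha : a ∈ Set.Icc a b := ⟨le_refl a, hab.le⟩
  have hb : b ∈ Set.Icc a b := ⟨hab.le, le_refl b⟩
  have hcmem : c ∈ Set.Icc a b := ⟨hac, hcb⟩
  -- the two pieces
  have key : ∀ u v : ℝ, u ∈ Set.Icc a b → v ∈ Set.Icc a b → ∀ p ∈ Set.Icc a b, u ≤ v →
      ‖∫ s in u..v, (f s - f p)‖ ≤ ∫ s in u..v, M * |s - p| := by
    intro u v hu hv p hp huv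
    refine (intervalIntegral.norm_integral_le_integral_norm huv).trans ?_
    apply intervalIntegral.integral_mono_on huv
    · exact ((hintf u v hu hv).sub (intervalIntegrable_const)).norm
    · apply ContinuousOn.intervalIntegrable
      apply Continuous.continuousOn
      continuity
    · intro s hs
      have hs' : s ∈ Set.Icc a b := Set.Icc_subset_Icc hu.1 hv.2 hs
      exact lip p hp s hs'
  have e1 : (∫ s in a..c, M * |s - a|) = M * ((c - a) ^ 2 / 2) := by
    have : ∀ s ∈ Set.uIcc a c, M * |s - a| = M * (s - a) := by
      intro s hs
      rw [Set.uIcc_of_le hac] at hs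
      rw [abs_of_nonneg (by linarith [hs.1])]
    rw [intervalIntegral.integral_congr this]
    rw [intervalIntegral.integral_const_mul]
    have : (∫ s in a..c, (s - a)) = (c - a) ^ 2 / 2 := by
      have := intervalIntegral.integral_comp_sub_right (fun x => x) a (a := a) (b := c)
      rw [this, integral_id]
      ring
    rw [this]
  have e2 : (∫ s in c..b, M * |s - b|) = M * ((b - c) ^ 2 / 2) := by
    have : ∀ s ∈ Set.uIcc c b, M * |s - b| = M * (b - s) := by
      intro s hs
      rw [Set.uIcc_of_le hcb] at hs
      rw [abs_of_nonpos (by linarith [hs.2]), neg_sub]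
    rw [intervalIntegral.integral_congr this]
    rw [intervalIntegral.integral_const_mul]
    have : (∫ s in c..b, (b - s)) = (b - c) ^ 2 / 2 := by
      have h1 : (∫ s in c..b, (b - s)) = (∫ s in c..b, (b : ℝ)) - ∫ s in c..b, s := by
        rw [← intervalIntegral.integral_sub intervalIntegrable_const]
        exact intervalIntegral.intervalIntegrable_id
      rw [h1, integral_id, intervalIntegral.integral_const, smul_eq_mul]
      ring
    rw [this]
  have k1 := key a c ha hcmem a ha hac
  have k2 := key c b hcmem hb b hb hcb
  rw [e1] at k1
  rw [e2] at k2
  -- decompose the main expression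
  have split : (∫ s in a..b, f s) - (b - a) • (w • f b + (1 - w) • f a) =
      (∫ s in a..c, (f s - f a)) + (∫ s in c..b, (f s - f b)) := by
    rw [intervalIntegral.integral_sub (hintf a c ha hcmem) intervalIntegrable_const,
        intervalIntegral.integral_sub (hintf c b hcmem hb) intervalIntegrable_const,
        intervalIntegral.integral_const, intervalIntegral.integral_const,
        ← intervalIntegral.integral_add_adjacent_intervals (hintf a c ha hcmem)
          (hintf c b hcmem hb)]
    have h1 : (b - a) * w = b - c := by rw [hc]; ring
    have h2 : (b - a) * (1 - w) = c - a := by rw [hc]; ring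
    rw [smul_add, smul_smul, smul_smul, h1, h2]
    abel
  rw [split]
  calc ‖(∫ s in a..c, (f s - f a)) + (∫ s in c..b, (f s - f b))‖
      ≤ ‖∫ s in a..c, (f s - f a)‖ + ‖∫ s in c..b, (f s - f b)‖ := norm_add_le _ _
    _ ≤ M * ((c - a) ^ 2 / 2) + M * ((b - c) ^ 2 / 2) := add_le_add k1 k2
    _ = ((1 / 4) * (b - a) ^ 2 + (w * b + (1 - w) * a - (a + b) / 2) ^ 2) * M := by
        rw [hc]; ring
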